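/- arXiv:1110.4073 — 5 statements merged into one kernel-verified Lean document; each statement's English description precedes it below -/
import Mathlib

section
/- Let A be an n×n complex matrix such that the conjugate-semilinear operator 𝒜 on ℂⁿ defined by 𝒜u = conj(A·u) is nilpotent (some power of 𝒜 is the zero map; equivalently, the matrix conj(A)·A is nilpotent). Then there exists a nonsingular n×n complex matrix S such that conj(S)⁻¹·A·S is a direct sum of nilpotent Jordan blocks, i.e., a block-diagonal matrix whose diagonal blocks are matrices with ones on the superdiagonal and zeros elsewhere. -/
/-!
The map `f u = conj (A u)` is conjugate-semilinear, and `f (f u) = conj(A) A u`, so `f` is nilpotent.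
A nilpotent semilinear map has a basis made of Jordan chains, by induction on the dimension:
chains for the restriction of `f` to `range f` are each lengthened by a preimage of their top, and
their bottoms, which lie in `ker f`, are completed to a basis of `ker f` by chains of length one.
Applying `f` to a vanishing combination kills the bottoms and leaves a combination of the old
chains, which gives linear independence.

Listing the chains one after the other gives a basis `v` with `f (v k) ∈ {0, v (k - 1)}`. If `S`
has columns `v` and `f (v j) = ∑ c_kj v k`, then `A v j = conj (f (v j)) = ∑ conj (c_kj) conj (v k)`,
that is `A S = conj(S) conj(C)`; here `conj(C) = C` is a direct sum of nilpotent Jordan blocks.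
-/

open Module Submodule Matrix

section JordanChains

variable {K V : Type*} [Field K] [AddCommGroup V] [Module K V] {σ : K →+* K}

/-- Chain `i` consists of the `ℓ i + 1` vectors `b i 0, …, b i (ℓ i)`, with bottom `b i 0`;
the values of `b i` beyond `ℓ i` play no role. -/
structure IsJordanChains (f : V →ₛₗ[σ] V) {ι : Type*} (ℓ : ι → ℕ) (b : ι → ℕ → V) : Prop where
  map_bottom : ∀ i, f (b i 0) = 0
  map_succ : ∀ i j, j < ℓ i → f (b i (j + 1)) = b i j

def chainFamily {ι : Type*} (ℓ : ι → ℕ) (b : ι → ℕ → V) (p : Σ i, Fin (ℓ i + 1)) : V :=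
  b p.1 p.2

namespace IsJordanChains

variable {f : V →ₛₗ[σ] V} {ι : Type*} {ℓ : ι → ℕ} {b : ι → ℕ → V}

theorem linearIndependent [Fintype ι] (hb : IsJordanChains f ℓ b)
    (hbot : LinearIndependent K fun i => b i 0)
    (htrunc : LinearIndependent K fun q : Σ i, Fin (ℓ i) => b q.1 q.2) :
    LinearIndependent K (chainFamily ℓ b) := by
  rw [Fintype.linearIndependent_iff] at hbot htrunc ⊢
  intro g hg
  have hsplit : ∑ i, g ⟨i, 0⟩ • b i 0 + ∑ q : Σ i, Fin (ℓ i), g ⟨q.1, q.2.succ⟩ • b q.1 (q.2 + 1)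
      = 0 := by
    simpa only [chainFamily, Fintype.sum_sigma, Fin.sum_univ_succ, Finset.sum_add_distrib,
      Fin.val_zero, Fin.val_succ] using hg
  have hupper : ∀ q : Σ i, Fin (ℓ i), g ⟨q.1, q.2.succ⟩ = 0 := by
    have := congrArg f hsplit
    simp only [map_add, map_sum, map_smulₛₗ, hb.map_bottom, smul_zero, Finset.sum_const_zero,
      zero_add, map_zero] at this
    intro q
    exact (map_eq_zero σ).1 (htrunc _ (by simpa [hb.map_succ _ _ (Fin.is_lt _)] using this) q)
  have hbottom : ∀ i, g ⟨i, 0⟩ = 0 :=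
    hbot _ (by simpa [hupper] using hsplit)
  rintro ⟨i, j⟩
  cases j using Fin.cases with
  | zero => exact hbottom i
  | succ j => exact hupper ⟨i, j⟩

theorem span_eq_top [RingHomSurjective σ] (hb : IsJordanChains f ℓ b)
    (hker : LinearMap.ker f ≤ span K (Set.range fun i => b i 0))
    (hrange : LinearMap.range f ≤ span K (Set.range fun q : Σ i, Fin (ℓ i) => b q.1 q.2)) :
    span K (Set.range (chainFamily ℓ b)) = ⊤ := by
  set U := span K (Set.range (chainFamily ℓ b))
  have hbot_le : span K (Set.range fun i => b i 0) ≤ U :=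
    span_mono (Set.range_subset_iff.2 fun i => ⟨⟨i, 0⟩, rfl⟩)
  have hrange_le : LinearMap.range f ≤ U.map f := by
    refine hrange.trans (span_le.2 (Set.range_subset_iff.2 fun q => ?_))
    rw [← hb.map_succ _ _ q.2.is_lt]
    exact mem_map_of_mem (subset_span ⟨⟨q.1, q.2.succ⟩, rfl⟩)
  refine eq_top_iff.2 fun v _ => ?_
  obtain ⟨u, hu, huv⟩ := mem_map.1 (hrange_le (LinearMap.mem_range_self f v))
  have hvu : v - u ∈ U := hbot_le (hker (by simp [huv]))
  simpa using add_mem hvu hu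

theorem extend {κ : Type*} (hb : IsJordanChains f ℓ b) {u : ι → V}
    (hu : ∀ i, f (u i) = b i (ℓ i)) {y : κ → V} (hy : ∀ k, f (y k) = 0) :
    IsJordanChains f (Sum.elim (fun i => ℓ i + 1) fun _ => 0)
      (Sum.elim (fun i j => if j ≤ ℓ i then b i j else u i) fun k _ => y k) := by
  refine ⟨fun a => ?_, fun a j hj => ?_⟩
  · cases a with
    | inl i => simpa using hb.map_bottom i
    | inr k => exact hy k
  · cases a with
    | inl i =>
      simp only [Sum.elim_inl]
      rcases (Nat.lt_succ_iff.1 hj).lt_or_eq with h | rfl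
      · rw [if_pos (show j + 1 ≤ ℓ i from h), if_pos h.le, hb.map_succ i j h]
      · rw [if_neg (by omega), if_pos le_rfl, hu]
    | inr k => exact absurd hj (Nat.not_lt_zero _)

end IsJordanChains

theorem LinearIndependent.exists_extension_of_forall_mem [FiniteDimensional K V]
    {U : Submodule K V} {ι : Type*} {g : ι → V} (hg : LinearIndependent K g) (hgU : ∀ i, g i ∈ U) :
    ∃ (k : ℕ) (y : Fin k → V), (∀ j, y j ∈ U) ∧ LinearIndependent K (Sum.elim g y) ∧
      U ≤ span K (Set.range (Sum.elim g y)) := by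
  obtain ⟨Q, hQ⟩ := (span K (Set.range g)).exists_isCompl
  let e := Module.finBasis K ↥(Q ⊓ U)
  have hspan_e : span K (Set.range ((Q ⊓ U).subtype ∘ e)) = Q ⊓ U := by
    rw [Set.range_comp, span_image, e.span_eq, map_subtype_top]
  refine ⟨_, (Q ⊓ U).subtype ∘ e, fun j => (e j).2.2, ?_, ?_⟩
  · refine hg.sum_type (e.linearIndependent.map' _ (Q ⊓ U).ker_subtype) ?_
    rw [hspan_e]
    exact hQ.disjoint.mono_right inf_le_left
  · rw [Set.Sum.elim_range, span_union, hspan_e,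
      ← sup_inf_assoc_of_le Q (span_le.2 (Set.range_subset_iff.2 hgU)), hQ.sup_eq_top, top_inf_eq]

theorem IsJordanChains.exists_of_span_eq_range [FiniteDimensional K V] [RingHomSurjective σ]
    {f : V →ₛₗ[σ] V} {ι : Type} [Fintype ι] {ℓ : ι → ℕ} {b : ι → ℕ → V}
    (hb : IsJordanChains f ℓ b) (hli : LinearIndependent K (chainFamily ℓ b))
    (hspan : span K (Set.range (chainFamily ℓ b)) = LinearMap.range f) :
    ∃ (ι' : Type) (_ : Fintype ι') (ℓ' : ι' → ℕ) (b' : ι' → ℕ → V), IsJordanChains f ℓ' b' ∧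
      LinearIndependent K (chainFamily ℓ' b') ∧ span K (Set.range (chainFamily ℓ' b')) = ⊤ := by
  have htop_mem : ∀ i, b i (ℓ i) ∈ LinearMap.range f := fun i =>
    hspan ▸ subset_span ⟨⟨i, Fin.last (ℓ i)⟩, rfl⟩
  choose u hu using htop_mem
  have hbot_li : LinearIndependent K fun i => b i 0 :=
    hli.comp (fun i => ⟨i, 0⟩) fun i j h => by cases h; rfl
  obtain ⟨k, y, hy, hli_ker, hker⟩ :=
    hbot_li.exists_extension_of_forall_mem (U := LinearMap.ker f) hb.map_bottom
  let ℓ' : ι ⊕ Fin k → ℕ := Sum.elim (fun i => ℓ i + 1) fun _ => 0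
  let b' : ι ⊕ Fin k → ℕ → V := Sum.elim (fun i j => if j ≤ ℓ i then b i j else u i) fun k _ => y k
  have hb' : IsJordanChains f ℓ' b' := hb.extend hu hy
  have hbot : (fun a => b' a 0) = Sum.elim (fun i => b i 0) y := by
    ext (i | k) <;> simp [b']
  let φ : (Σ a, Fin (ℓ' a)) → Σ i, Fin (ℓ i + 1)
    | ⟨.inl i, j⟩ => ⟨i, j⟩
    | ⟨.inr _, j⟩ => j.elim0
  have htrunc : (fun q : Σ a, Fin (ℓ' a) => b' q.1 q.2) = chainFamily ℓ b ∘ φ := by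
    funext q
    rcases q with ⟨i | k, j⟩
    · simp [b', φ, chainFamily, Nat.lt_succ_iff.1 (j.is_lt : (j : ℕ) < ℓ i + 1)]
    · exact j.elim0
  have hφ : Function.Injective φ := by
    rintro ⟨i | k, j⟩ ⟨i' | k', j'⟩ h
    · cases h; rfl
    all_goals exact Fin.elim0 ‹_›
  refine ⟨ι ⊕ Fin k, inferInstance, ℓ', b', hb', hb'.linearIndependent ?_ ?_, hb'.span_eq_top ?_ ?_⟩
  · rwa [hbot]
  · rw [htrunc]; exact hli.comp φ hφ
  · rwa [hbot]
  · rw [← hspan]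
    exact span_mono (Set.range_subset_iff.2 fun p =>
      ⟨⟨.inl p.1, p.2⟩, by simp [b', chainFamily, Fin.is_le]⟩)

theorem exists_isJordanChains [FiniteDimensional K V] [RingHomSurjective σ] (f : V →ₛₗ[σ] V)
    (hf : ∃ N, (⇑f)^[N] = 0) :
    ∃ (ι : Type) (_ : Fintype ι) (ℓ : ι → ℕ) (b : ι → ℕ → V), IsJordanChains f ℓ b ∧
      LinearIndependent K (chainFamily ℓ b) ∧ span K (Set.range (chainFamily ℓ b)) = ⊤ := by
  induction hd : finrank K V using Nat.strong_induction_on generalizing V with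
  | _ d ih =>
  obtain ⟨N, hN⟩ := hf
  by_cases htop : LinearMap.range f = ⊤
  · have : Subsingleton V := ⟨fun v w => by
      obtain ⟨v', rfl⟩ := (LinearMap.range_eq_top.1 htop).iterate N v
      obtain ⟨w', rfl⟩ := (LinearMap.range_eq_top.1 htop).iterate N w
      simp [hN]⟩
    exact ⟨Empty, inferInstance, Empty.elim, Empty.elim, ⟨Empty.rec, Empty.rec⟩,
      linearIndependent_empty_type, Subsingleton.elim _ _⟩
  set W := LinearMap.range f
  let fW : W →ₛₗ[σ] W := f.rangeRestrict.comp W.subtype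
  have hsemi : Function.Semiconj W.subtype fW f := fun _ => rfl
  have hfW : (⇑fW)^[N] = 0 :=
    funext fun w => Subtype.ext ((hsemi.iterate_right N w).trans (congrFun hN w))
  obtain ⟨ι, _, ℓ, c, hc, hli, hspan⟩ := ih _ (hd ▸ finrank_lt htop) fW ⟨N, hfW⟩ rfl
  refine IsJordanChains.exists_of_span_eq_range (b := fun i j => (c i j : V))
    ⟨fun i => congrArg Subtype.val (hc.map_bottom i),
      fun i j hj => congrArg Subtype.val (hc.map_succ i j hj)⟩
    (hli.map' W.subtype W.ker_subtype) ?_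
  calc span K (Set.range (W.subtype ∘ chainFamily ℓ c)) = (⊤ : Submodule K W).map W.subtype := by
        rw [← hspan, map_span, Set.range_comp]
    _ = W := map_subtype_top W

theorem exists_basis_map_eq_zero_or_eq_pred [FiniteDimensional K V] [RingHomSurjective σ]
    (f : V →ₛₗ[σ] V) (hf : ∃ N, (⇑f)^[N] = 0) :
    ∃ (N : ℕ) (v : Basis (Fin N) K V),
      ∀ k, f (v k) = 0 ∨ ∃ k' : Fin N, (k' : ℕ) + 1 = k ∧ f (v k) = v k' := by
  obtain ⟨ι, _, ℓ, b, hb, hli, hspan⟩ := exists_isJordanChains f hf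
  let e := (Fintype.equivFin ι).symm
  let φ : Fin (∑ a, (ℓ (e a) + 1)) ≃ Σ i, Fin (ℓ i + 1) :=
    finSigmaFinEquiv.symm.trans (Equiv.sigmaCongrLeft (β := fun i => Fin (ℓ i + 1)) e)
  refine ⟨_, (Basis.mk hli hspan.ge).reindex φ.symm, fun k => ?_⟩
  obtain ⟨⟨a, j⟩, rfl⟩ := finSigmaFinEquiv.surjective k
  simp only [Basis.reindex_apply, Equiv.symm_symm, Basis.mk_apply, φ, Equiv.trans_apply,
    Equiv.symm_apply_apply, Equiv.sigmaCongrLeft_apply, chainFamily]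
  cases j using Fin.cases with
  | zero => exact .inl (hb.map_bottom _)
  | succ j =>
    refine .inr ⟨finSigmaFinEquiv ⟨a, j.castSucc⟩, ?_, ?_⟩
    · simp [finSigmaFinEquiv_apply, add_assoc]
    · rw [Equiv.symm_apply_apply]
      exact hb.map_succ (e a) j j.is_lt

end JordanChains

section ConjMulVec

variable {K n : Type*} [Field K] [StarRing K] [Fintype n]

def conjMulVec (A : Matrix n n K) : (n → K) →ₗ⋆[K] (n → K) :=
  (starLinearEquiv K).toLinearMap.comp A.mulVecLin

theorem conjMulVec_apply (A : Matrix n n K) (u : n → K) : conjMulVec A u = star (A *ᵥ u) := rfl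

theorem conjMulVec_conjMulVec (A : Matrix n n K) (u : n → K) :
    conjMulVec A (conjMulVec A u) = (A.map (starRingEnd K) * A) *ᵥ u := by
  funext i
  rw [conjMulVec_apply, conjMulVec_apply, ← Matrix.mulVec_mulVec, Pi.star_apply,
    ← starRingEnd_apply, RingHom.map_mulVec,
    show ⇑(starRingEnd K) ∘ star (A *ᵥ u) = A *ᵥ u from funext fun k => starRingEnd_self_apply _]

theorem iterate_two_mul_conjMulVec [DecidableEq n] (A : Matrix n n K) (k : ℕ) (u : n → K) :
    (⇑(conjMulVec A))^[2 * k] u = ((A.map (starRingEnd K) * A) ^ k) *ᵥ u := by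
  induction k generalizing u with
  | zero => simp
  | succ k ih =>
    rw [Nat.mul_succ, Function.iterate_add_apply, ih, Function.iterate_succ_apply,
      Function.iterate_one, conjMulVec_conjMulVec, mulVec_mulVec, pow_succ]

theorem exists_iterate_conjMulVec_eq_zero [DecidableEq n] {A : Matrix n n K}
    (hA : IsNilpotent (A.map (starRingEnd K) * A)) : ∃ N, (⇑(conjMulVec A))^[N] = 0 := by
  obtain ⟨k, hk⟩ := hA
  exact ⟨2 * k, funext fun u => by rw [iterate_two_mul_conjMulVec, hk, Matrix.zero_mulVec]; rfl⟩

theorem conj_inv_mul_mul_toMatrix [DecidableEq n] (A : Matrix n n K) (v : Basis n K (n → K)) :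
    (((Pi.basisFun K n).toMatrix v).map (starRingEnd K))⁻¹ * A * (Pi.basisFun K n).toMatrix v =
      Matrix.of fun i j => star (v.repr (conjMulVec A (v j)) i) := by
  set S := (Pi.basisFun K n).toMatrix v
  have hS : IsUnit S := Matrix.linearIndependent_cols_iff_isUnit.1 v.linearIndependent
  have hdet : IsUnit (S.map (starRingEnd K)).det :=
    (Matrix.isUnit_iff_isUnit_det _).1 (hS.map (starRingEnd K).mapMatrix)
  have hAS : A * S =
      S.map (starRingEnd K) * Matrix.of fun i j => star (v.repr (conjMulVec A (v j)) i) := by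
    ext i j
    have h := congrFun (v.sum_repr (conjMulVec A (v j))) i
    simp only [Finset.sum_apply, Pi.smul_apply, smul_eq_mul, conjMulVec_apply, Pi.star_apply] at h
    simp only [mul_apply, map_apply, of_apply, S, Basis.toMatrix_apply, Pi.basisFun_repr,
      starRingEnd_apply, ← star_mul', ← star_sum, conjMulVec_apply, mul_comm (v _ i), h, star_star]
    rfl
  rw [Matrix.mul_assoc, hAS, Matrix.nonsing_inv_mul_cancel_left _ _ hdet]

end ConjMulVec

/-- Every nilpotent conjugate-semilinear operator `u ↦ conj (A·u)` on `ℂⁿ`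
(equivalently, `conj(A)·A` is nilpotent) is consimilar to a direct sum of
nilpotent Jordan blocks: there is a nonsingular `S` such that
`conj(S)⁻¹ * A * S` has zero entries everywhere except possibly on the
superdiagonal, where every entry is `0` or `1`. -/
theorem stmt_5 {n : ℕ} (A : Matrix (Fin n) (Fin n) ℂ)
    (hnil : IsNilpotent ((A.map (starRingEnd ℂ)) * A)) :
    ∃ S : Matrix (Fin n) (Fin n) ℂ, IsUnit S ∧
      ∀ i j : Fin n,
        ((j : ℕ) ≠ (i : ℕ) + 1 → ((S.map (starRingEnd ℂ))⁻¹ * A * S) i j = 0) ∧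
        ((j : ℕ) = (i : ℕ) + 1 →
          ((S.map (starRingEnd ℂ))⁻¹ * A * S) i j = 0 ∨
          ((S.map (starRingEnd ℂ))⁻¹ * A * S) i j = 1) := by
  obtain ⟨N, v, hv⟩ := exists_basis_map_eq_zero_or_eq_pred (conjMulVec A)
    (exists_iterate_conjMulVec_eq_zero hnil)
  obtain rfl : n = N := by simpa using finrank_eq_card_basis v
  refine ⟨(Pi.basisFun ℂ (Fin n)).toMatrix v,
    Matrix.linearIndependent_cols_iff_isUnit.1 v.linearIndependent, fun i j => ?_⟩
  rw [conj_inv_mul_mul_toMatrix]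
  rcases hv j with h | ⟨k, hk, h⟩
  · simp [h]
  · have hki : k = i ↔ (j : ℕ) = i + 1 := by rw [Fin.ext_iff]; omega
    simp [h, Finsupp.single_apply, hki]
    tauto
end

section
/- Let t ≥ 1, let p₁,…,p_t be pairwise distinct positive integers and q₁,…,q_t positive integers, and let J = J_{p₁}(0_{q₁}) ⊕ ⋯ ⊕ J_{p_t}(0_{q_t}). Let S be a complex matrix of the same size satisfying conj(S)·J = J·S, partitioned into blocks S_{ij} of size p_iq_i × p_jq_j, each partitioned into a p_i×p_j array of q_i×q_j subblocks, so that (by the structure theorem for such S) the subblocks of the diagonal block S_{ii} on its main subblock diagonal are C_{ii}, conj(C_{ii}), C_{ii}, conj(C_{ii}), … for some q_i×q_i matrix C_{ii} (namely C_{ii} is the (1,1) subblock of S_{ii}). Then S is nonsingular if and only if C_{ii} is nonsingular for every i = 1,…,t. -/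
/-- `J = J_{p₁}(0_{q₁}) ⊕ ⋯ ⊕ J_{p_t}(0_{q_t})`, indexed by
`Σ i, Fin (p i) × Fin (q i)`. -/
def JordanSum {t : ℕ} (p q : Fin t → ℕ) :
    Matrix (Σ i : Fin t, Fin (p i) × Fin (q i)) (Σ i : Fin t, Fin (p i) × Fin (q i)) ℂ :=
  fun x y =>
    if x.1 = y.1 ∧ (y.2.1 : ℕ) = (x.2.1 : ℕ) + 1 ∧ (y.2.2 : ℕ) = (x.2.2 : ℕ) then 1 else 0

/-!
Write `S_{ij}(k, l)` for the `(k, l)` subblock of `S_{ij}`. Comparing entries of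
`conj(S) J = J S` gives `S_{ij}(k+1, l+1) = conj S_{ij}(k, l)`, `S_{ij}(k+1, 0) = 0` and
`S_{ij}(p_i - 1, l) = 0` for `l + 1 < p_j`. Propagating the zeros along subblock diagonals,
`S_{ij}(k, l) = 0` whenever `l < k`, or `p_i - k < p_j - l`. Hence `S` is block triangular for
the order of the indices `(i, k, a)` by `(k, -p_i)` lexicographically. As the `p_i` are
distinct, its diagonal blocks are the `S_{ii}(k, k) = conj^k C_{ii}`, so
`det S = ∏_{i, k < p_i} conj^k (det C_{ii})`.
-/

open Matrix Finset

abbrev BlockIndex {t : ℕ} (p q : Fin t → ℕ) := Σ i : Fin t, Fin (p i) × Fin (q i)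

section JordanSum

variable {t : ℕ} {p q : Fin t → ℕ}

lemma jordanSum_apply_zero_right (x : BlockIndex p q) (j : Fin t) (h : 0 < p j) (b : Fin (q j)) :
    JordanSum p q x ⟨j, (⟨0, h⟩, b)⟩ = 0 := by
  simp [JordanSum]

lemma jordanSum_apply_succ_right (x : BlockIndex p q) (j : Fin t) {l : ℕ} (hl : l + 1 < p j)
    (b : Fin (q j)) :
    JordanSum p q x ⟨j, (⟨l + 1, hl⟩, b)⟩ = if x = ⟨j, (⟨l, by omega⟩, b)⟩ then 1 else 0 := by
  obtain ⟨i, k, a⟩ := x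
  by_cases hij : i = j
  · subst hij
    simp [JordanSum, Fin.ext_iff, eq_comm]
  · simp [JordanSum, hij]

lemma jordanSum_apply_of_succ_lt_left (i : Fin t) {k : ℕ} (hk : k + 1 < p i) (a : Fin (q i))
    (y : BlockIndex p q) :
    JordanSum p q ⟨i, (⟨k, by omega⟩, a)⟩ y = if y = ⟨i, (⟨k + 1, hk⟩, a)⟩ then 1 else 0 := by
  obtain ⟨j, l, b⟩ := y
  by_cases hij : i = j
  · subst hij
    simp [JordanSum, Fin.ext_iff]
  · simp [JordanSum, hij, Ne.symm hij]

lemma jordanSum_apply_last_left (i : Fin t) {k : ℕ} (hk : k < p i) (hlast : k + 1 = p i)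
    (a : Fin (q i)) (y : BlockIndex p q) :
    JordanSum p q ⟨i, (⟨k, hk⟩, a)⟩ y = 0 := by
  obtain ⟨j, l, b⟩ := y
  simp only [JordanSum, ite_eq_right_iff, one_ne_zero, imp_false, not_and]
  rintro rfl
  have := l.2
  omega

variable (M : Matrix (BlockIndex p q) (BlockIndex p q) ℂ)

lemma mul_jordanSum_apply_zero (x : BlockIndex p q) (j : Fin t) (h : 0 < p j) (b : Fin (q j)) :
    (M * JordanSum p q) x ⟨j, (⟨0, h⟩, b)⟩ = 0 := by
  simp [mul_apply, jordanSum_apply_zero_right]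

lemma mul_jordanSum_apply_succ (x : BlockIndex p q) (j : Fin t) {l : ℕ} (hl : l + 1 < p j)
    (b : Fin (q j)) :
    (M * JordanSum p q) x ⟨j, (⟨l + 1, hl⟩, b)⟩ = M x ⟨j, (⟨l, by omega⟩, b)⟩ := by
  simp [mul_apply, jordanSum_apply_succ_right]

lemma jordanSum_mul_apply_of_succ_lt (i : Fin t) {k : ℕ} (hk : k + 1 < p i) (a : Fin (q i))
    (y : BlockIndex p q) :
    (JordanSum p q * M) ⟨i, (⟨k, by omega⟩, a)⟩ y = M ⟨i, (⟨k + 1, hk⟩, a)⟩ y := by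
  simp [mul_apply, jordanSum_apply_of_succ_lt_left i hk a]

lemma jordanSum_mul_apply_last (i : Fin t) {k : ℕ} (hk : k < p i) (hlast : k + 1 = p i)
    (a : Fin (q i)) (y : BlockIndex p q) :
    (JordanSum p q * M) ⟨i, (⟨k, hk⟩, a)⟩ y = 0 := by
  simp [mul_apply, jordanSum_apply_last_left _ hk hlast]

end JordanSum

def ConjCommutes {t : ℕ} {p q : Fin t → ℕ} (S : Matrix (BlockIndex p q) (BlockIndex p q) ℂ) :
    Prop :=
  S.map (starRingEnd ℂ) * JordanSum p q = JordanSum p q * S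

def diagSubblock {t : ℕ} {p q : Fin t → ℕ} (S : Matrix (BlockIndex p q) (BlockIndex p q) ℂ)
    (i : Fin t) (k : Fin (p i)) : Matrix (Fin (q i)) (Fin (q i)) ℂ :=
  of fun a b => S ⟨i, (k, a)⟩ ⟨i, (k, b)⟩

def blockLevel {t : ℕ} (p q : Fin t → ℕ) (x : BlockIndex p q) : ℕ ×ₗ ℕᵒᵈ :=
  toLex ((x.2.1 : ℕ), OrderDual.toDual (p x.1))

namespace ConjCommutes

variable {t : ℕ} {p q : Fin t → ℕ} {S : Matrix (BlockIndex p q) (BlockIndex p q) ℂ}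

lemma apply_succ_succ (hS : ConjCommutes S) {i j : Fin t} {k l : ℕ} (hk : k + 1 < p i)
    (hl : l + 1 < p j) (a : Fin (q i)) (b : Fin (q j)) :
    S ⟨i, (⟨k + 1, hk⟩, a)⟩ ⟨j, (⟨l + 1, hl⟩, b)⟩ =
      starRingEnd ℂ (S ⟨i, (⟨k, by omega⟩, a)⟩ ⟨j, (⟨l, by omega⟩, b)⟩) := by
  have h := congrFun₂ hS ⟨i, (⟨k, by omega⟩, a)⟩ ⟨j, (⟨l + 1, hl⟩, b)⟩
  rw [mul_jordanSum_apply_succ, jordanSum_mul_apply_of_succ_lt] at h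
  exact h.symm

lemma apply_succ_zero (hS : ConjCommutes S) {i j : Fin t} {k : ℕ} (hk : k + 1 < p i)
    (h0 : 0 < p j) (a : Fin (q i)) (b : Fin (q j)) :
    S ⟨i, (⟨k + 1, hk⟩, a)⟩ ⟨j, (⟨0, h0⟩, b)⟩ = 0 := by
  have h := congrFun₂ hS ⟨i, (⟨k, by omega⟩, a)⟩ ⟨j, (⟨0, h0⟩, b)⟩
  rw [mul_jordanSum_apply_zero, jordanSum_mul_apply_of_succ_lt] at h
  exact h.symm

lemma apply_last_of_succ_lt (hS : ConjCommutes S) {i j : Fin t} {k l : ℕ} (hk : k < p i)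
    (hlast : k + 1 = p i) (hl : l + 1 < p j) (a : Fin (q i)) (b : Fin (q j)) :
    S ⟨i, (⟨k, hk⟩, a)⟩ ⟨j, (⟨l, by omega⟩, b)⟩ = 0 := by
  have h := congrFun₂ hS ⟨i, (⟨k, hk⟩, a)⟩ ⟨j, (⟨l + 1, hl⟩, b)⟩
  rwa [mul_jordanSum_apply_succ, jordanSum_mul_apply_last _ _ hk hlast, map_apply,
    map_eq_zero] at h

lemma apply_eq_zero_of_lt (hS : ConjCommutes S) {i j : Fin t} {k l : ℕ} (hk : k < p i)
    (hl : l < p j) (hlk : l < k) (a : Fin (q i)) (b : Fin (q j)) :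
    S ⟨i, (⟨k, hk⟩, a)⟩ ⟨j, (⟨l, hl⟩, b)⟩ = 0 := by
  obtain ⟨k, rfl⟩ : ∃ k', k = k' + 1 := ⟨k - 1, by omega⟩
  induction l generalizing k with
  | zero => exact hS.apply_succ_zero hk hl a b
  | succ l ih =>
    obtain ⟨k, rfl⟩ : ∃ k', k = k' + 1 := ⟨k - 1, by omega⟩
    rw [hS.apply_succ_succ hk hl, map_eq_zero]
    exact ih _ _ (by omega) (by omega)

lemma apply_eq_zero_of_sub_lt_sub (hS : ConjCommutes S) {i j : Fin t} {k l : ℕ} (hk : k < p i)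
    (hl : l < p j) (hlt : p i - k < p j - l) (a : Fin (q i)) (b : Fin (q j)) :
    S ⟨i, (⟨k, hk⟩, a)⟩ ⟨j, (⟨l, hl⟩, b)⟩ = 0 := by
  obtain ⟨d, hd⟩ : ∃ d, p i = k + 1 + d := ⟨p i - k - 1, by omega⟩
  induction d generalizing k l with
  | zero => exact hS.apply_last_of_succ_lt hk (by omega) (by omega) a b
  | succ d ih =>
    have h := hS.apply_succ_succ (k := k) (l := l) (by omega) (by omega) a b
    rwa [ih _ _ (by omega) (by omega), eq_comm, map_eq_zero] at h

lemma diagSubblock_succ (hS : ConjCommutes S) (i : Fin t) {k : ℕ} (hk : k + 1 < p i) :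
    diagSubblock S i ⟨k + 1, hk⟩ = (diagSubblock S i ⟨k, by omega⟩).map (starRingEnd ℂ) := by
  ext a b
  exact hS.apply_succ_succ hk hk a b

lemma det_diagSubblock_eq_zero_iff (hS : ConjCommutes S) (i : Fin t) (k : Fin (p i)) :
    (diagSubblock S i k).det = 0 ↔ (diagSubblock S i ⟨0, k.pos⟩).det = 0 := by
  obtain ⟨k, hk⟩ := k
  induction k with
  | zero => rfl
  | succ k ih =>
    rw [hS.diagSubblock_succ i hk, ← RingHom.mapMatrix_apply, ← RingHom.map_det, map_eq_zero,
      ih (by omega)]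

lemma blockTriangular_blockLevel (hS : ConjCommutes S) : S.BlockTriangular (blockLevel p q) := by
  rintro ⟨i, k, a⟩ ⟨j, l, b⟩ h
  rcases Prod.Lex.toLex_lt_toLex.1 h with hlk | ⟨hkl, hp⟩
  · exact hS.apply_eq_zero_of_lt k.2 l.2 hlk a b
  · have : p i < p j := OrderDual.toDual_lt_toDual.1 hp
    exact hS.apply_eq_zero_of_sub_lt_sub k.2 l.2 (by simp only at hkl; omega) a b

end ConjCommutes

section BlockLevel

variable {t : ℕ} {p q : Fin t → ℕ}

lemma blockLevel_eq_iff (hp : Function.Injective p) {i : Fin t} (k : Fin (p i)) (a : Fin (q i))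
    (y : BlockIndex p q) :
    blockLevel p q y = blockLevel p q ⟨i, (k, a)⟩ ↔ ∃ b, y = ⟨i, (k, b)⟩ := by
  obtain ⟨j, l, b⟩ := y
  constructor
  · intro h
    simp only [blockLevel, toLex_inj, Prod.mk.injEq, OrderDual.toDual_inj] at h
    obtain rfl := hp h.2
    exact ⟨b, by rw [Fin.ext h.1]⟩
  · rintro ⟨b, h⟩
    cases h
    rfl

lemma det_toSquareBlock_blockLevel (hp : Function.Injective p)
    (S : Matrix (BlockIndex p q) (BlockIndex p q) ℂ) (i : Fin t) (k : Fin (p i)) (a : Fin (q i)) :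
    (S.toSquareBlock (blockLevel p q) (blockLevel p q ⟨i, (k, a)⟩)).det =
      (diagSubblock S i k).det := by
  let f : Fin (q i) → {y // blockLevel p q y = blockLevel p q ⟨i, (k, a)⟩} :=
    fun b => ⟨⟨i, (k, b)⟩, (blockLevel_eq_iff hp k a _).2 ⟨b, rfl⟩⟩
  have hf : Function.Bijective f := by
    refine ⟨fun b b' h => ?_, fun y => ?_⟩
    · simpa [f] using congrArg Subtype.val h
    · obtain ⟨b, hb⟩ := (blockLevel_eq_iff hp k a y).1 y.2
      exact ⟨b, Subtype.ext hb.symm⟩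
  rw [← det_submatrix_equiv_self (Equiv.ofBijective f hf)]
  rfl

lemma ConjCommutes.det_ne_zero_iff (hp : Function.Injective p)
    {S : Matrix (BlockIndex p q) (BlockIndex p q) ℂ} (hS : ConjCommutes S) :
    S.det ≠ 0 ↔ ∀ x : BlockIndex p q, (diagSubblock S x.1 x.2.1).det ≠ 0 := by
  classical
  rw [hS.blockTriangular_blockLevel.det, prod_ne_zero_iff, forall_mem_image]
  simp only [mem_univ, true_implies, Sigma.forall, Prod.forall, det_toSquareBlock_blockLevel hp]

end BlockLevel

theorem stmt_8_general {t : ℕ} (p q : Fin t → ℕ)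
    (hp : ∀ i, 0 < p i)
    (hdistinct : Function.Injective p)
    (S : Matrix (Σ i : Fin t, Fin (p i) × Fin (q i))
      (Σ i : Fin t, Fin (p i) × Fin (q i)) ℂ)
    (hS : (S.map (starRingEnd ℂ)) * JordanSum p q = JordanSum p q * S) :
    IsUnit S ↔
      ∀ i : Fin t,
        IsUnit (Matrix.of (fun a b : Fin (q i) =>
          S ⟨i, (⟨0, hp i⟩, a)⟩ ⟨i, (⟨0, hp i⟩, b)⟩)) := by
  have hS : ConjCommutes S := hS
  simp_rw [isUnit_iff_isUnit_det, isUnit_iff_ne_zero, hS.det_ne_zero_iff hdistinct]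
  constructor
  · intro h i
    rcases isEmpty_or_nonempty (Fin (q i)) with hq | ⟨⟨a⟩⟩
    · simp
    · exact h ⟨i, (⟨0, hp i⟩, a)⟩
  · rintro h ⟨i, k, a⟩
    exact (hS.det_diagSubblock_eq_zero_iff i k).not.2 (h i)

/-- A matrix `S` with `conj(S) · J = J · S` (for `J` a direct sum of nilpotent
Jordan blocks `J_{p_i}(0_{q_i})` with pairwise distinct `p_i`) is nonsingular
if and only if, for every `i`, the `(1,1)` subblock `C_{ii}` of the `i`-th
diagonal block `S_{ii}` is nonsingular. -/
theorem stmt_8 {t : ℕ} (ht : 1 ≤ t) (p q : Fin t → ℕ)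
    (hp : ∀ i, 0 < p i) (hq : ∀ i, 0 < q i)
    (hdistinct : Function.Injective p)
    (S : Matrix (Σ i : Fin t, Fin (p i) × Fin (q i))
      (Σ i : Fin t, Fin (p i) × Fin (q i)) ℂ)
    (hS : (S.map (starRingEnd ℂ)) * JordanSum p q = JordanSum p q * S) :
    IsUnit S ↔
      ∀ i : Fin t,
        IsUnit (Matrix.of (fun a b : Fin (q i) =>
          S ⟨i, (⟨0, hp i⟩, a)⟩ ⟨i, (⟨0, hp i⟩, b)⟩)) :=
  stmt_8_general p q hp hdistinct S hS
end

section
/- Let n₁ ≥ n₂ ≥ ⋯ ≥ n_r ≥ 1 be integers and let W be the nilpotent Weyr matrix of size N = n₁ + ⋯ + n_r: W is partitioned into blocks W_{αβ} of size n_α × n_β (1 ≤ α, β ≤ r), where W_{α,α+1} is the n_α × n_{α+1} matrix whose top n_{α+1} rows form the identity I_{n_{α+1}} and whose remaining rows are zero, and all other blocks W_{αβ} are zero. If X is an N×N complex matrix, partitioned conformally into blocks X_{αβ}, such that conj(X)·W = W·X, then X is upper block triangular: X_{αβ} = 0 for all α > β. -/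
/-!
Row `(α - 1, a)` of `W X` is row `(α, a)` of `X`, and column `(β, b)` of `conj(X) W` is
column `(β - 1, b)` of `conj(X)`, or zero when `β` is the first block; both shifts keep
the in-block index because the block sizes decrease. Comparing the `((α - 1, a), (β, b))`
entries of `conj(X) W = W X` therefore gives `X_{(α,a),(β,b)} = conj X_{(α-1,a),(β-1,b)}`
(or `0`), and induction on `β` moves every entry below the block diagonal up to the
first block column, where it vanishes.
-/

open Matrix

variable {R : Type*} {r : ℕ}

def nilpotentWeyr [Zero R] [One R] (n : Fin r → ℕ) :
    Matrix (Σ α : Fin r, Fin (n α)) (Σ α : Fin r, Fin (n α)) R :=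
  Matrix.of fun x y => if (y.1 : ℕ) = (x.1 : ℕ) + 1 ∧ (y.2 : ℕ) = (x.2 : ℕ) then 1 else 0

section

variable {n : Fin r → ℕ}

theorem Sigma.fin_ext {x y : Σ α : Fin r, Fin (n α)} (h₁ : (x.1 : ℕ) = y.1)
    (h₂ : (x.2 : ℕ) = y.2) : x = y :=
  Sigma.ext (Fin.ext h₁) ((Fin.heq_ext_iff (congrArg n (Fin.ext h₁))).2 h₂)

variable [NonAssocSemiring R]

theorem nilpotentWeyr_mul_apply (X : Matrix (Σ α : Fin r, Fin (n α)) (Σ α : Fin r, Fin (n α)) R)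
    {x x' : Σ α : Fin r, Fin (n α)} (h₁ : (x'.1 : ℕ) = x.1 + 1) (h₂ : (x'.2 : ℕ) = x.2)
    (y : Σ α : Fin r, Fin (n α)) :
    (nilpotentWeyr n * X : Matrix _ _ R) x y = X x' y := by
  rw [mul_apply, Fintype.sum_eq_single x']
  · simp [nilpotentWeyr, h₁, h₂]
  · intro z hz
    have : ¬((z.1 : ℕ) = x.1 + 1 ∧ (z.2 : ℕ) = x.2) := fun ⟨hz₁, hz₂⟩ ↦
      hz (Sigma.fin_ext (hz₁.trans h₁.symm) (hz₂.trans h₂.symm))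
    simp [nilpotentWeyr, this]

theorem mul_nilpotentWeyr_apply (X : Matrix (Σ α : Fin r, Fin (n α)) (Σ α : Fin r, Fin (n α)) R)
    (x : Σ α : Fin r, Fin (n α)) {y y' : Σ α : Fin r, Fin (n α)} (h₁ : (y.1 : ℕ) = y'.1 + 1)
    (h₂ : (y.2 : ℕ) = y'.2) :
    (X * nilpotentWeyr n : Matrix _ _ R) x y = X x y' := by
  rw [mul_apply, Fintype.sum_eq_single y']
  · simp [nilpotentWeyr, h₁, h₂]
  · intro z hz
    have : ¬((y.1 : ℕ) = z.1 + 1 ∧ (y.2 : ℕ) = z.2) := fun ⟨hz₁, hz₂⟩ ↦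
      hz (Sigma.fin_ext (by omega) (by omega))
    simp [nilpotentWeyr, this]

theorem mul_nilpotentWeyr_apply_of_fst_eq_zero
    (X : Matrix (Σ α : Fin r, Fin (n α)) (Σ α : Fin r, Fin (n α)) R)
    (x : Σ α : Fin r, Fin (n α)) {y : Σ α : Fin r, Fin (n α)} (hy : (y.1 : ℕ) = 0) :
    (X * nilpotentWeyr n : Matrix _ _ R) x y = 0 := by
  refine Finset.sum_eq_zero fun z _ ↦ ?_
  have : ¬((y.1 : ℕ) = z.1 + 1 ∧ (y.2 : ℕ) = z.2) := by omega
  simp [nilpotentWeyr, this]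

end

theorem Fin.exists_val_add_one_eq {α : Fin r} (hα : 0 < (α : ℕ)) :
    ∃ α' : Fin r, (α' : ℕ) + 1 = α :=
  ⟨⟨α - 1, by omega⟩, by simp only; omega⟩

theorem blockTriangular_of_map_mul_nilpotentWeyr_eq [NonAssocSemiring R] (σ : R →+* R)
    {n : Fin r → ℕ} (hn : Antitone n)
    {X : Matrix (Σ α : Fin r, Fin (n α)) (Σ α : Fin r, Fin (n α)) R}
    (hX : X.map σ * nilpotentWeyr n = nilpotentWeyr n * X) :
    ∀ α β : Fin r, β < α → ∀ (a : Fin (n α)) (b : Fin (n β)), X ⟨α, a⟩ ⟨β, b⟩ = 0 := by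
  intro α β
  induction β using WellFoundedLT.induction generalizing α with
  | _ β ih =>
    intro hβα a b
    obtain ⟨α', hα'⟩ := Fin.exists_val_add_one_eq (α := α) (by omega)
    have hα'α : α' ≤ α := Fin.le_iff_val_le_val.2 (by omega)
    let a' : Fin (n α') := Fin.castLE (hn hα'α) a
    have hentry := congrFun (congrFun hX ⟨α', a'⟩) ⟨β, b⟩
    rw [nilpotentWeyr_mul_apply X (x := ⟨α', a'⟩) (x' := ⟨α, a⟩) hα'.symm rfl] at hentry
    rw [← hentry]
    rcases Nat.eq_zero_or_pos (β : ℕ) with hβ | hβ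
    · exact mul_nilpotentWeyr_apply_of_fst_eq_zero _ _ hβ
    · obtain ⟨β', hβ'⟩ := Fin.exists_val_add_one_eq hβ
      have hβ'β : β' < β := Fin.lt_def.2 (by omega)
      let b' : Fin (n β') := Fin.castLE (hn hβ'β.le) b
      rw [mul_nilpotentWeyr_apply _ _ (y := ⟨β, b⟩) (y' := ⟨β', b'⟩) hβ'.symm rfl, map_apply,
        ih β' hβ'β α' (Fin.lt_def.2 (by omega)) a' b', map_zero]

theorem stmt_9_general {r : ℕ} (n : Fin r → ℕ)
    (hmono : ∀ α β : Fin r, α ≤ β → n β ≤ n α)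
    (W : Matrix (Σ α : Fin r, Fin (n α)) (Σ α : Fin r, Fin (n α)) ℂ)
    (hW : ∀ x y : Σ α : Fin r, Fin (n α),
      W x y = if (y.1 : ℕ) = (x.1 : ℕ) + 1 ∧ (y.2 : ℕ) = (x.2 : ℕ) then 1 else 0)
    (X : Matrix (Σ α : Fin r, Fin (n α)) (Σ α : Fin r, Fin (n α)) ℂ)
    (hX : (X.map (starRingEnd ℂ)) * W = W * X) :
    ∀ (α β : Fin r), β < α → ∀ (a : Fin (n α)) (b : Fin (n β)),
      X ⟨α, a⟩ ⟨β, b⟩ = 0 := by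
  obtain rfl : W = nilpotentWeyr n := Matrix.ext hW
  exact blockTriangular_of_map_mul_nilpotentWeyr_eq (starRingEnd ℂ) hmono hX

/-- If `W` is the nilpotent Weyr matrix with block sizes `n₁ ≥ n₂ ≥ ⋯ ≥ n_r ≥ 1`
(blocks `W_{α,α+1}` have the identity `I_{n_{α+1}}` in their top rows and zeros
below, all other blocks are zero) and `X` satisfies `conj(X) · W = W · X`,
then `X` is upper block triangular: `X_{αβ} = 0` for `α > β`. -/
theorem stmt_9 {r : ℕ} (n : Fin r → ℕ)
    (hmono : ∀ α β : Fin r, α ≤ β → n β ≤ n α)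
    (hpos : ∀ α, 1 ≤ n α)
    (W : Matrix (Σ α : Fin r, Fin (n α)) (Σ α : Fin r, Fin (n α)) ℂ)
    (hW : ∀ x y : Σ α : Fin r, Fin (n α),
      W x y = if (y.1 : ℕ) = (x.1 : ℕ) + 1 ∧ (y.2 : ℕ) = (x.2 : ℕ) then 1 else 0)
    (X : Matrix (Σ α : Fin r, Fin (n α)) (Σ α : Fin r, Fin (n α)) ℂ)
    (hX : (X.map (starRingEnd ℂ)) * W = W * X) :
    ∀ (α β : Fin r), β < α → ∀ (a : Fin (n α)) (b : Fin (n β)),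
      X ⟨α, a⟩ ⟨β, b⟩ = 0 :=
  stmt_9_general n hmono W hW X hX
end

section
/- Let n ≥ 1 and let X, Y, X', Y' be n×n complex matrices. Define the 5n×5n complex matrices J, M, M', each partitioned into a 5×5 array of n×n blocks: J has the identity I_n in block positions (1,2), (2,3), (3,4) and zero blocks elsewhere; M has X in block position (1,3), Y in block position (1,5), conj(X) in block position (2,4), I_n in block position (5,4), and zero blocks elsewhere; and M' is obtained from M by replacing X and Y with X' and Y'. Then the pairs (J, M) and (J, M') are consimilar if and only if the pairs (X, Y) and (X', Y') are consimilar, i.e., if and only if there exists a nonsingular n×n complex matrix C with conj(C)⁻¹·X·C = X' and conj(C)⁻¹·Y·C = Y'. -/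
/-- Two pairs of square complex matrices are consimilar if there is a
nonsingular `S` with `conj(S)⁻¹ * Aᵢ * S = Bᵢ` for `i = 1, 2`. -/
def ConsimilarPair {m : Type*} [Fintype m] [DecidableEq m]
    (A₁ A₂ B₁ B₂ : Matrix m m ℂ) : Prop :=
  ∃ S : Matrix m m ℂ, IsUnit S ∧
    (S.map (starRingEnd ℂ))⁻¹ * A₁ * S = B₁ ∧
    (S.map (starRingEnd ℂ))⁻¹ * A₂ * S = B₂

/-- The `5n × 5n` matrix `J` with identity blocks in positions
`(1,2), (2,3), (3,4)` (1-based) and zero blocks elsewhere. -/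
def Jmat (n : ℕ) : Matrix (Fin 5 × Fin n) (Fin 5 × Fin n) ℂ :=
  fun i j =>
    if ((i.1 = 0 ∧ j.1 = 1) ∨ (i.1 = 1 ∧ j.1 = 2) ∨ (i.1 = 2 ∧ j.1 = 3)) ∧ i.2 = j.2
      then 1 else 0

/-- The `5n × 5n` matrix `M` with blocks `X` at `(1,3)`, `Y` at `(1,5)`,
`conj(X)` at `(2,4)`, `I_n` at `(5,4)` (1-based positions), zero elsewhere. -/
def Mmat (n : ℕ) (X Y : Matrix (Fin n) (Fin n) ℂ) :
    Matrix (Fin 5 × Fin n) (Fin 5 × Fin n) ℂ :=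
  fun i j =>
    if i.1 = 0 ∧ j.1 = 2 then X i.2 j.2
    else if i.1 = 0 ∧ j.1 = 4 then Y i.2 j.2
    else if i.1 = 1 ∧ j.1 = 3 then starRingEnd ℂ (X i.2 j.2)
    else if i.1 = 4 ∧ j.1 = 3 then (if i.2 = j.2 then 1 else 0)
    else 0

/-!
View `5n × 5n` matrices as `5 × 5` matrices of `n × n` blocks. If `S` is invertible with
`J S = S̄ J` and `M S = S̄ M'`, comparing blocks shows that the first block column of `S` is
`(C, 0, 0, 0, 0)`, so `C` is invertible, and that the diagonal blocks of `S` are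
`C, C̄, C, C̄, C`; the `(1,3)` and `(1,5)` blocks of `M S = S̄ M'` then read `X C = C̄ X'`
and `Y C = C̄ Y'`. Conversely, such a `C` makes `diag(C, C̄, C, C̄, C)` a consimilarity.
-/

open Matrix ComplexConjugate

namespace Matrix

variable {m p : Type*}

theorem inv_mul_mul_eq_iff [Fintype m] [DecidableEq m] {K : Type*} [CommRing K]
    {P A S B : Matrix m m K} (hP : IsUnit P) : P⁻¹ * A * S = B ↔ A * S = P * B := by
  have hdet := P.isUnit_iff_isUnit_det.mp hP
  rw [Matrix.mul_assoc]
  constructor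
  · rintro rfl
    rw [mul_nonsing_inv_cancel_left _ _ hdet]
  · rintro h
    rw [h, nonsing_inv_mul_cancel_left _ _ hdet]

theorem map_conj_injective : Function.Injective fun A : Matrix m p ℂ => A.map conj :=
  map_injective (RingHom.injective _)

@[simp]
theorem map_conj_map_conj (A : Matrix m p ℂ) : (A.map conj).map conj = A := by
  ext; simp

@[simp]
theorem map_conj_eq_zero {A : Matrix m p ℂ} : A.map conj = 0 ↔ A = 0 :=
  map_conj_injective.eq_iff' (Matrix.map_zero _ (map_zero _))

theorem isUnit_apply_self_of_isUnit {ι K : Type*} [Fintype ι] [DecidableEq ι] [Fintype m]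
    [DecidableEq m] [CommRing K] {S : Matrix ι ι (Matrix m m K)} (hS : IsUnit S) {i : ι}
    (hcol : ∀ k, k ≠ i → S k i = 0) : IsUnit (S i i) := by
  obtain ⟨T, hTS⟩ := hS.exists_left_inv
  have hii : T i i * S i i = 1 := by
    have := congrFun (congrFun hTS i) i
    rwa [mul_apply, Finset.sum_eq_single i (fun k _ hk => by rw [hcol k hk, mul_zero])
      (by simp), one_apply_eq] at this
  exact (S i i).isUnit_iff_isUnit_det.mpr (isUnit_det_of_left_inverse hii)

end Matrix

theorem consimilarPair_iff_mul_eq {m : Type*} [Fintype m] [DecidableEq m]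
    {A₁ A₂ B₁ B₂ : Matrix m m ℂ} :
    ConsimilarPair A₁ A₂ B₁ B₂ ↔ ∃ S : Matrix m m ℂ, IsUnit S ∧
      A₁ * S = S.map conj * B₁ ∧ A₂ * S = S.map conj * B₂ := by
  refine exists_congr fun S => and_congr_right fun hS => ?_
  have hS' : IsUnit (S.map conj) := hS.map (starRingEnd ℂ).mapMatrix
  rw [inv_mul_mul_eq_iff hS', inv_mul_mul_eq_iff hS']

theorem consimilarPair_comp_iff {ι m : Type*} [Fintype ι] [DecidableEq ι] [Fintype m]
    [DecidableEq m] {A₁ A₂ B₁ B₂ : Matrix ι ι (Matrix m m ℂ)} :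
    ConsimilarPair (comp ι ι m m ℂ A₁) (comp ι ι m m ℂ A₂) (comp ι ι m m ℂ B₁)
        (comp ι ι m m ℂ B₂) ↔
      ∃ S : Matrix ι ι (Matrix m m ℂ), IsUnit S ∧
        A₁ * S = S.map (·.map conj) * B₁ ∧ A₂ * S = S.map (·.map conj) * B₂ := by
  have hmul (A B : Matrix ι ι (Matrix m m ℂ)) :
      comp ι ι m m ℂ A * comp ι ι m m ℂ B = comp ι ι m m ℂ (A * B) :=
    ((compRingEquiv ι m ℂ).map_mul A B).symm
  rw [consimilarPair_iff_mul_eq, (comp ι ι m m ℂ).surjective.exists]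
  refine exists_congr fun S => ?_
  simp only [isUnit_comp_iff, ← comp_map_map, hmul, (comp ι ι m m ℂ).injective.eq_iff]

section Blocks

variable {n : ℕ}

def Jblocks (n : ℕ) : Matrix (Fin 5) (Fin 5) (Matrix (Fin n) (Fin n) ℂ) :=
  !![0, 1, 0, 0, 0; 0, 0, 1, 0, 0; 0, 0, 0, 1, 0; 0, 0, 0, 0, 0; 0, 0, 0, 0, 0]

def Mblocks (X Y : Matrix (Fin n) (Fin n) ℂ) :
    Matrix (Fin 5) (Fin 5) (Matrix (Fin n) (Fin n) ℂ) :=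
  !![0, 0, X, 0, Y; 0, 0, 0, X.map conj, 0; 0, 0, 0, 0, 0; 0, 0, 0, 0, 0; 0, 0, 0, 1, 0]

def diagBlocks (C : Matrix (Fin n) (Fin n) ℂ) :
    Matrix (Fin 5) (Fin 5) (Matrix (Fin n) (Fin n) ℂ) :=
  diagonal ![C, C.map conj, C, C.map conj, C]

-- `Fin.reduceFinMk` turns the indices `⟨k, _⟩` produced by `fin_cases` back into numerals,
-- without which `cons_val` does not fire and `simp` gets very slow.
theorem Jmat_eq_comp (n : ℕ) : Jmat n = comp _ _ _ _ _ (Jblocks n) := by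
  ext ⟨i, a⟩ ⟨j, b⟩
  fin_cases i <;> fin_cases j <;>
    simp only [Fin.reduceFinMk, comp_apply, Jblocks, of_apply, cons_val, Jmat] <;> simp [one_apply]

theorem Mmat_eq_comp (X Y : Matrix (Fin n) (Fin n) ℂ) :
    Mmat n X Y = comp _ _ _ _ _ (Mblocks X Y) := by
  ext ⟨i, a⟩ ⟨j, b⟩
  fin_cases i <;> fin_cases j <;>
    simp only [Fin.reduceFinMk, comp_apply, Mblocks, of_apply, cons_val, Mmat] <;> simp [one_apply]

theorem corner_consimilar_of_blocks {X Y X' Y' : Matrix (Fin n) (Fin n) ℂ}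
    {S : Matrix (Fin 5) (Fin 5) (Matrix (Fin n) (Fin n) ℂ)} (hS : IsUnit S)
    (hJ : Jblocks n * S = S.map (·.map conj) * Jblocks n)
    (hM : Mblocks X Y * S = S.map (·.map conj) * Mblocks X' Y') :
    IsUnit (S 0 0) ∧ X * S 0 0 = (S 0 0).map conj * X' ∧ Y * S 0 0 = (S 0 0).map conj * Y' := by
  have hJ' i j : (Jblocks n * S) i j = (S.map (·.map conj) * Jblocks n) i j := by rw [hJ]
  have hM' i j : (Mblocks X Y * S) i j = (S.map (·.map conj) * Mblocks X' Y') i j := by rw [hM]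
  have h10 := hJ' 0 0
  have h20 := hJ' 1 0
  have h30 := hJ' 2 0
  have h40 := (hJ' 4 1).symm
  have h41 := (hJ' 4 2).symm
  have h42 := (hJ' 4 3).symm
  have h24 := hJ' 1 4
  have h11 := hJ' 0 1
  have h22 := hJ' 1 2
  have h33 := hJ' 2 3
  have h43 := hM' 4 3
  have hX := hM' 0 2
  have hY := hM' 0 4
  simp only [Jblocks, Mblocks, mul_apply, Fin.sum_univ_five, of_apply, cons_val, map_apply,
    zero_mul, one_mul, mul_zero, mul_one, zero_add, add_zero, map_conj_eq_zero]
    at h10 h20 h30 h40 h41 h42 h24 h11 h22 h33 h43 hX hY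
  rw [h11, map_conj_map_conj] at h22
  have h44 : S 4 4 = S 0 0 := map_conj_injective (by simpa [h41, h33, h22] using h43.symm)
  simp only [h22, h42, h24, h44, mul_zero, add_zero, zero_add] at hX hY
  refine ⟨isUnit_apply_self_of_isUnit hS fun k hk => ?_, hX, hY⟩
  fin_cases k
  exacts [absurd rfl hk, h10, h20, h30, h40]

theorem isUnit_diagBlocks {C : Matrix (Fin n) (Fin n) ℂ} (hC : IsUnit C) :
    IsUnit (diagBlocks C) := by
  have hC' : IsUnit (C.map conj) := hC.map (starRingEnd ℂ).mapMatrix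
  refine (Pi.isUnit_iff.mpr fun i => ?_).map (diagonalRingHom (Fin 5) (Matrix (Fin n) (Fin n) ℂ))
  fin_cases i <;> assumption

theorem map_conj_diagBlocks (C : Matrix (Fin n) (Fin n) ℂ) :
    (diagBlocks C).map (·.map conj) = diagonal ![C.map conj, C, C.map conj, C, C.map conj] := by
  rw [diagBlocks, diagonal_map (by simp)]
  congr 1
  ext1 i
  fin_cases i <;> simp [Function.comp_def]

theorem Jblocks_mul_diagBlocks (C : Matrix (Fin n) (Fin n) ℂ) :
    Jblocks n * diagBlocks C = (diagBlocks C).map (·.map conj) * Jblocks n := by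
  ext1 i j
  rw [map_conj_diagBlocks, diagBlocks, mul_diagonal, diagonal_mul]
  fin_cases i <;> fin_cases j <;> simp only [Fin.reduceFinMk, Jblocks, of_apply, cons_val] <;> simp

theorem Mblocks_mul_diagBlocks {X Y X' Y' C : Matrix (Fin n) (Fin n) ℂ}
    (hX : X * C = C.map conj * X') (hY : Y * C = C.map conj * Y') :
    Mblocks X Y * diagBlocks C = (diagBlocks C).map (·.map conj) * Mblocks X' Y' := by
  have hXbar : X.map conj * C.map conj = C * X'.map conj := by
    simpa only [Matrix.map_mul, map_conj_map_conj] using congrArg (·.map conj) hX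
  ext1 i j
  rw [map_conj_diagBlocks, diagBlocks, mul_diagonal, diagonal_mul]
  fin_cases i <;> fin_cases j <;> simp only [Fin.reduceFinMk, Mblocks, of_apply, cons_val] <;>
    simp [hX, hY, hXbar]

end Blocks

theorem stmt_10_general {n : ℕ} (X Y X' Y' : Matrix (Fin n) (Fin n) ℂ) :
    ConsimilarPair (Jmat n) (Mmat n X Y) (Jmat n) (Mmat n X' Y') ↔
      ∃ C : Matrix (Fin n) (Fin n) ℂ, IsUnit C ∧
        (C.map (starRingEnd ℂ))⁻¹ * X * C = X' ∧
        (C.map (starRingEnd ℂ))⁻¹ * Y * C = Y' := by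
  show _ ↔ ConsimilarPair X Y X' Y'
  rw [Jmat_eq_comp, Mmat_eq_comp, Mmat_eq_comp, consimilarPair_comp_iff,
    consimilarPair_iff_mul_eq]
  constructor
  · rintro ⟨S, hS, hJ, hM⟩
    exact ⟨S 0 0, corner_consimilar_of_blocks hS hJ hM⟩
  · rintro ⟨C, hC, hX, hY⟩
    exact ⟨diagBlocks C, isUnit_diagBlocks hC, Jblocks_mul_diagBlocks C,
      Mblocks_mul_diagBlocks hX hY⟩

/-- The pairs `(J, M)` and `(J, M')` are consimilar if and only if `(X, Y)`
and `(X', Y')` are consimilar. -/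
theorem stmt_10 {n : ℕ} (hn : 1 ≤ n) (X Y X' Y' : Matrix (Fin n) (Fin n) ℂ) :
    ConsimilarPair (Jmat n) (Mmat n X Y) (Jmat n) (Mmat n X' Y') ↔
      ∃ C : Matrix (Fin n) (Fin n) ℂ, IsUnit C ∧
        (C.map (starRingEnd ℂ))⁻¹ * X * C = X' ∧
        (C.map (starRingEnd ℂ))⁻¹ * Y * C = Y' :=
  stmt_10_general X Y X' Y'
end

section
/- Let n ≥ 1 and let X, Y be arbitrary n×n complex matrices. Define the 5n×5n complex matrices J and M, each partitioned into a 5×5 array of n×n blocks: J has the identity I_n in block positions (1,2), (2,3), (3,4) and zero blocks elsewhere; M has X in block position (1,3), Y in block position (1,5), conj(X) in block position (2,4), I_n in block position (5,4), and zero blocks elsewhere. Then conj(M)·J = J·M; consequently the conjugate-semilinear operators u ↦ conj(J·u) and u ↦ conj(M·u) on ℂ^{5n} commute. -/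
/-! Since `conj (A · conj (B u)) = (conj A · B) u`, the semilinear maps of `A` and `B` commute
as soon as `conj A · B = conj B · A`; for the real matrix `J` this is `conj M · J = J · M`.
Multiplying by `J` shifts block rows up (on the left) or block columns right (on the right),
and both products reduce to the single block `conj X` in position `(1,4)`. -/

namespace Matrix

variable {l m k R : Type*} [Fintype m] [CommSemiring R] [StarRing R]

theorem star_mulVec_eq_map_mulVec (A : Matrix l m R) (v : m → R) :
    star (A *ᵥ v) = A.map (starRingEnd R) *ᵥ star v := by
  ext i
  exact RingHom.map_mulVec (starRingEnd R) A v i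

theorem star_mulVec_star_mulVec [Fintype k] (A : Matrix l m R) (B : Matrix m k R) (u : k → R) :
    star (A *ᵥ star (B *ᵥ u)) = (A.map (starRingEnd R) * B) *ᵥ u := by
  rw [star_mulVec_eq_map_mulVec, star_star, mulVec_mulVec]

theorem star_mulVec_comm_of_map_mul_eq (A B : Matrix m m R)
    (h : A.map (starRingEnd R) * B = B.map (starRingEnd R) * A) (u : m → R) :
    star (A *ᵥ star (B *ᵥ u)) = star (B *ᵥ star (A *ᵥ u)) := by
  rw [star_mulVec_star_mulVec, star_mulVec_star_mulVec, h]

end Matrix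

theorem Jmat_map_conj (n : ℕ) : (Jmat n).map (starRingEnd ℂ) = Jmat n := by
  ext i j
  simp only [Jmat, Matrix.map_apply]
  split <;> simp

section BlockShift

variable {n : ℕ}

theorem Jmat_mul_apply (A : Matrix (Fin 5 × Fin n) (Fin 5 × Fin n) ℂ) (a b : Fin 5)
    (i j : Fin n) :
    (Jmat n * A) (a, i) (b, j) = if a.val < 3 then A (a + 1, i) (b, j) else 0 := by
  simp only [Matrix.mul_apply, Jmat, Fintype.sum_prod_type, Fin.sum_univ_five]
  fin_cases a <;> simp

theorem mul_Jmat_apply (A : Matrix (Fin 5 × Fin n) (Fin 5 × Fin n) ℂ) (a b : Fin 5)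
    (i j : Fin n) :
    (A * Jmat n) (a, i) (b, j) =
      if 1 ≤ b.val ∧ b.val ≤ 3 then A (a, i) (b - 1, j) else 0 := by
  simp only [Matrix.mul_apply, Jmat, Fintype.sum_prod_type, Fin.sum_univ_five]
  fin_cases b <;> simp

end BlockShift

theorem map_conj_Mmat_mul_Jmat {n : ℕ} (X Y : Matrix (Fin n) (Fin n) ℂ) :
    (Mmat n X Y).map (starRingEnd ℂ) * Jmat n = Jmat n * Mmat n X Y := by
  ext ⟨a, i⟩ ⟨b, j⟩
  rw [Jmat_mul_apply, mul_Jmat_apply]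
  fin_cases a <;> fin_cases b <;> simp [Mmat]

theorem stmt_13_general {n : ℕ} (X Y : Matrix (Fin n) (Fin n) ℂ) :
    ((Mmat n X Y).map (starRingEnd ℂ)) * Jmat n = Jmat n * Mmat n X Y ∧
      ∀ u : Fin 5 × Fin n → ℂ,
        star ((Mmat n X Y).mulVec (star ((Jmat n).mulVec u))) =
          star ((Jmat n).mulVec (star ((Mmat n X Y).mulVec u))) := by
  have hMJ := map_conj_Mmat_mul_Jmat X Y
  refine ⟨hMJ, Matrix.star_mulVec_comm_of_map_mul_eq _ _ ?_⟩
  rw [hMJ, Jmat_map_conj]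

/-- `conj(M) · J = J · M`, and consequently the conjugate-semilinear operators
`u ↦ conj (J·u)` and `u ↦ conj (M·u)` on `ℂ^{5n}` commute. -/
theorem stmt_13 {n : ℕ} (hn : 1 ≤ n) (X Y : Matrix (Fin n) (Fin n) ℂ) :
    ((Mmat n X Y).map (starRingEnd ℂ)) * Jmat n = Jmat n * Mmat n X Y ∧
      ∀ u : Fin 5 × Fin n → ℂ,
        star ((Mmat n X Y).mulVec (star ((Jmat n).mulVec u))) =
          star ((Jmat n).mulVec (star ((Mmat n X Y).mulVec u))) :=
  stmt_13_general X Y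
end
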